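/- arXiv:1907.02301 — 6 statements merged into one kernel-verified Lean document; each statement's English description precedes it below -/
import Mathlib

section
/- Let K be a category with finite limits and coequalizers of kernel pairs. The following are equivalent: (1) K has a small strong generator consisting of regular projective objects; (2) there exists a small set P of regular projective objects of K such that a morphism f of K is a regular epimorphism if and only if Hom(P, f) is a surjection for every P ∈ P. Furthermore, if these conditions hold, K is a regular category. -/
open CategoryTheory CategoryTheory.Limits Opposite

universe w v u

namespace Paper

variable {C : Type u} [Category.{v} C]

/-- An object is finitely presentable if its covariant hom-functor preserves
small filtered colimits. -/
def FinPres (A : C) : Prop :=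
  ∀ (J : Type v) (_ : SmallCategory J), IsFiltered J →
    PreservesColimitsOfShape J (coyoneda.obj (op A))

/-- `f` is a regular epimorphism (a coequalizer of some pair). -/
def IsRegEpi {X Y : C} (f : X ⟶ Y) : Prop := Nonempty (RegularEpi f)

/-- `P` is regular projective: `Hom(P,-)` sends regular epimorphisms to surjections. -/
def RegProjective (P : C) : Prop :=
  ∀ ⦃X Y : C⦄ (f : X ⟶ Y), IsRegEpi f → Function.Surjective (fun g : P ⟶ X => g ≫ f)

/-- A regular category: finite limits, coequalizers of kernel pairs, and regular
epimorphisms stable under pullback. -/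
structure IsRegularCategory (C : Type u) [Category.{v} C] : Prop where
  hasFiniteLimits : HasFiniteLimits C
  hasCoequalizersOfKernelPairs :
    ∀ {X Y R : C} (f : X ⟶ Y) (p q : R ⟶ X), IsKernelPair f p q → HasCoequalizer p q
  regEpiPullbackStable :
    ∀ {P X Y Z : C} (fst : P ⟶ X) (snd : P ⟶ Y) (f : X ⟶ Z) (g : Y ⟶ Z),
      IsPullback fst snd f g → IsRegEpi f → IsRegEpi snd

/-- `(p, q)` is an internal equivalence relation on `X` (via generalized elements). -/
structure IsEquivalenceRelationPair {R X : C} (p q : R ⟶ X) : Prop where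
  jointly_mono : ∀ {Z : C} (a b : Z ⟶ R), a ≫ p = b ≫ p → a ≫ q = b ≫ q → a = b
  refl : ∀ {Z : C} (x : Z ⟶ X), ∃ r : Z ⟶ R, r ≫ p = x ∧ r ≫ q = x
  symm : ∀ {Z : C} (r : Z ⟶ R), ∃ s : Z ⟶ R, s ≫ p = r ≫ q ∧ s ≫ q = r ≫ p
  trans : ∀ {Z : C} (r s : Z ⟶ R), r ≫ q = s ≫ p →
    ∃ t : Z ⟶ R, t ≫ p = r ≫ p ∧ t ≫ q = s ≫ q

/-- An exact category: regular and every equivalence relation is effective. -/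
structure IsExactCategory (C : Type u) [Category.{v} C] extends IsRegularCategory C : Prop where
  effectiveEquivalenceRelations :
    ∀ {R X : C} (p q : R ⟶ X), IsEquivalenceRelationPair p q →
      ∃ (Y : C) (f : X ⟶ Y), IsKernelPair f p q

/-- Locally finitely presentable category. -/
structure IsLFP (C : Type u) [Category.{v} C] : Prop where
  hasColimits : HasColimitsOfSize.{v, v} C
  exists_generator : ∃ (ι : Type v) (G : ι → C),
    ObjectProperty.IsDetecting (Set.range G) ∧ ∀ i, FinPres (G i)

/-- A finitary quasivariety: cocomplete with a small strong generator of finitely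
presentable regular projective objects. -/
structure IsFinitaryQuasivariety (C : Type u) [Category.{v} C] : Prop where
  hasColimits : HasColimitsOfSize.{v, v} C
  exists_generator : ∃ (ι : Type v) (G : ι → C),
    ObjectProperty.IsDetecting (Set.range G) ∧ ∀ i, FinPres (G i) ∧ RegProjective (G i)

/-- The injectivity class determined by a family of morphisms. -/
def Inj {L : Type u} [Category.{v} L] {ι : Type w} (A B : ι → L) (h : ∀ i, A i ⟶ B i) :
    Set L :=
  {X | ∀ (i : ι) (g : A i ⟶ X), ∃ g' : B i ⟶ X, h i ≫ g' = g}

/-- `p : X ⟶ S` is a weak reflection of `X` into `D`. -/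
def WeakReflection {L : Type u} [Category.{v} L] (D : Set L) {X S : L} (p : X ⟶ S) : Prop :=
  S ∈ D ∧ ∀ T ∈ D, ∀ g : X ⟶ T, ∃ k : S ⟶ T, p ≫ k = g

/-! Let `c` be the coequalizer of the kernel pair of `f` and `t` the comparison map with
`c ≫ t = f`. As `c` is a regular epimorphism, regular projectivity lifts two `G`-points
identified by `t` to points identified by `f`, hence by `c`; so `t` is injective on `G`-points,
and surjective on them when `f` is. A detecting `G` then makes `t` invertible and `f` regular.

Conversely, if every map surjective on `G`-points is a regular epimorphism, the equalizer of
two maps agreeing on `G`-points is a monic regular epimorphism, so `G` is separating; a map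
along which `G`-points lift uniquely is then monic and a regular epimorphism, so invertible.
Pullbacks of maps surjective on `G`-points are again surjective on `G`-points, which gives
regularity. -/

section

variable {ι : Type*} {G : ι → C}

lemma isIso_of_bijective_comp (hdet : ObjectProperty.IsDetecting (Set.range G)) {X Y : C}
    (t : X ⟶ Y) (ht : ∀ i, Function.Bijective (fun g : G i ⟶ X => g ≫ t)) : IsIso t :=
  hdet t fun _ ⟨i, hi⟩ => hi ▸ fun y => (ht i).existsUnique y

lemma isIso_coequalizer_desc_kernelPair (hdet : ObjectProperty.IsDetecting (Set.range G))
    (hproj : ∀ i, RegProjective (G i)) {X Y : C} (f : X ⟶ Y) [HasPullback f f]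
    [HasCoequalizer (pullback.fst f f) (pullback.snd f f)]
    (hf : ∀ i, Function.Surjective (fun g : G i ⟶ X => g ≫ f)) :
    IsIso (coequalizer.desc f pullback.condition) := by
  set c := coequalizer.π (pullback.fst f f) (pullback.snd f f)
  have hc : ∀ i, Function.Surjective (fun g : G i ⟶ X => g ≫ c) :=
    fun i => hproj i c ⟨coequalizerRegular _ _⟩
  refine isIso_of_bijective_comp hdet _ fun i => ⟨fun u v huv => ?_, fun y => ?_⟩
  · obtain ⟨u', rfl⟩ := hc i u
    obtain ⟨v', rfl⟩ := hc i v
    have hf' : u' ≫ f = v' ≫ f := by simpa [c] using huv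
    calc u' ≫ c = pullback.lift u' v' hf' ≫ pullback.fst f f ≫ c := by
          rw [pullback.lift_fst_assoc]
      _ = pullback.lift u' v' hf' ≫ pullback.snd f f ≫ c := by rw [coequalizer.condition]
      _ = v' ≫ c := by rw [pullback.lift_snd_assoc]
  · obtain ⟨x, rfl⟩ := hf i y
    exact ⟨x ≫ c, by simp [c]⟩

lemma isRegEpi_of_surjective (hdet : ObjectProperty.IsDetecting (Set.range G))
    (hproj : ∀ i, RegProjective (G i)) {X Y : C} (f : X ⟶ Y) [HasPullback f f]
    [HasCoequalizer (pullback.fst f f) (pullback.snd f f)]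
    (hf : ∀ i, Function.Surjective (fun g : G i ⟶ X => g ≫ f)) : IsRegEpi f := by
  have := isIso_coequalizer_desc_kernelPair hdet hproj f hf
  exact ⟨(coequalizerRegular _ _).ofArrowIso
    (Arrow.isoMk' _ f (Iso.refl _) (asIso (coequalizer.desc f pullback.condition)))⟩

lemma isSeparating_of_surjective_imp_isRegEpi [HasEqualizers C]
    (hG : ∀ {X Y : C} (f : X ⟶ Y),
      (∀ i, Function.Surjective (fun g : G i ⟶ X => g ≫ f)) → IsRegEpi f) :
    ObjectProperty.IsSeparating (Set.range G) := by
  intro X Y a b hab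
  have hι : IsRegEpi (equalizer.ι a b) := hG _ fun i z =>
    ⟨equalizer.lift z (hab _ ⟨i, rfl⟩ z), equalizer.lift_ι _ _⟩
  have := isIso_of_regularEpi_of_mono _ hι.some
  rw [← cancel_epi (equalizer.ι a b), equalizer.condition]

lemma isDetecting_of_surjective_imp_isRegEpi [HasEqualizers C]
    (hG : ∀ {X Y : C} (f : X ⟶ Y),
      (∀ i, Function.Surjective (fun g : G i ⟶ X => g ≫ f)) → IsRegEpi f) :
    ObjectProperty.IsDetecting (Set.range G) := by
  intro X Y f hf
  have hreg : IsRegEpi f := hG f fun i y => (hf _ ⟨i, rfl⟩ y).exists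
  have : Mono f := ⟨fun a b hab =>
    isSeparating_of_surjective_imp_isRegEpi hG a b fun _ ⟨i, hi⟩ z => by
      subst hi
      exact (hf _ ⟨i, rfl⟩ (z ≫ a ≫ f)).unique (by simp) (by simp [hab])⟩
  exact isIso_of_regularEpi_of_mono f hreg.some

lemma isRegEpi_snd_of_isPullback
    (hG : ∀ {X Y : C} (f : X ⟶ Y),
      (∀ i, Function.Surjective (fun g : G i ⟶ X => g ≫ f)) → IsRegEpi f)
    (hproj : ∀ i, RegProjective (G i)) {P X Y Z : C}
    {fst : P ⟶ X} {snd : P ⟶ Y} {f : X ⟶ Z} {g : Y ⟶ Z} (hpb : IsPullback fst snd f g)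
    (hf : IsRegEpi f) : IsRegEpi snd :=
  hG snd fun i y =>
    let ⟨x, hx⟩ := hproj i f hf (y ≫ g)
    ⟨hpb.lift x y hx, hpb.lift_snd _ _ _⟩

end

/-- For a category `K` with finite limits and coequalizers of kernel
pairs, having a small strong generator of regular projectives is equivalent to the
existence of a small family of regular projectives jointly detecting regular
epimorphisms; moreover either condition implies that `K` is regular. -/
theorem statement2 (K : Type u) [Category.{v} K] [HasFiniteLimits K]
    (hcoeq : ∀ {X Y R : K} (f : X ⟶ Y) (p q : R ⟶ X), IsKernelPair f p q → HasCoequalizer p q) :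
    ((∃ (ι : Type v) (G : ι → K), ObjectProperty.IsDetecting (Set.range G) ∧ ∀ i, RegProjective (G i)) ↔
      (∃ (ι : Type v) (G : ι → K), (∀ i, RegProjective (G i)) ∧
        ∀ {X Y : K} (f : X ⟶ Y),
          IsRegEpi f ↔ ∀ i, Function.Surjective (fun g : G i ⟶ X => g ≫ f))) ∧
    ((∃ (ι : Type v) (G : ι → K), ObjectProperty.IsDetecting (Set.range G) ∧ ∀ i, RegProjective (G i)) →
      IsRegularCategory K) := by
  have characterizes : (∃ (ι : Type v) (G : ι → K),
        ObjectProperty.IsDetecting (Set.range G) ∧ ∀ i, RegProjective (G i)) →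
      ∃ (ι : Type v) (G : ι → K), (∀ i, RegProjective (G i)) ∧
        ∀ {X Y : K} (f : X ⟶ Y),
          IsRegEpi f ↔ ∀ i, Function.Surjective (fun g : G i ⟶ X => g ≫ f) := by
    rintro ⟨ι, G, hdet, hproj⟩
    refine ⟨ι, G, hproj, fun f => ⟨fun hf i => hproj i f hf, fun hf => ?_⟩⟩
    have := hcoeq f _ _ (IsPullback.of_hasPullback f f)
    exact isRegEpi_of_surjective hdet hproj f hf
  refine ⟨⟨characterizes, fun ⟨ι, G, hproj, hG⟩ => ?_⟩, fun h => ?_⟩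
  · exact ⟨ι, G, isDetecting_of_surjective_imp_isRegEpi fun f => (hG f).2, hproj⟩
  · obtain ⟨ι, G, hproj, hG⟩ := characterizes h
    exact ⟨inferInstance, hcoeq, fun _ _ _ _ hpb hf =>
      isRegEpi_snd_of_isPullback (fun f => (hG f).2) hproj hpb hf⟩

end Paper
end

section
/- Let K be a finitary quasivariety. Then regular epimorphisms in K are closed under small products: for any set-indexed family (e_i : A_i → B_i) of regular epimorphisms, the induced morphism ∏_i A_i → ∏_i B_i is a regular epimorphism. -/
open CategoryTheory CategoryTheory.Limits Opposite

universe w v u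

namespace Paper

variable {C : Type u} [Category.{v} C]

/-!
A morphism `m : X ⟶ Y` through which every map from a regular projective generator into `Y`
factors is a regular epimorphism: it is the coequalizer of the family of all pairs of maps from
generators into `X` that `m` identifies. Indeed, the comparison map `t` from that coequalizer
to `Y` is bijective on maps out of generators (surjective by the factorization hypothesis,
injective by regular projectivity of the generators), hence an isomorphism since the generators
are detecting. For a product of regular epimorphisms the factorization hypothesis holds
componentwise.
-/

theorem RegProjective.exists_lift_along_pi {P : C} (hP : RegProjective P) {ι : Type v}
    {A B : ι → C} {e : ∀ i, A i ⟶ B i} (he : ∀ i, IsRegEpi (e i))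
    {PA PB : C} {pA : ∀ i, PA ⟶ A i} {pB : ∀ i, PB ⟶ B i}
    (LA : IsLimit (Fan.mk PA pA)) (LB : IsLimit (Fan.mk PB pB))
    {m : PA ⟶ PB} (hm : ∀ i, m ≫ pB i = pA i ≫ e i) (g : P ⟶ PB) :
    ∃ u : P ⟶ PA, u ≫ m = g := by
  choose u hu using fun i => hP (e i) (he i) (g ≫ pB i)
  refine ⟨LA.lift (Fan.mk P u), LB.hom_ext fun ⟨i⟩ => ?_⟩
  have hA := LA.fac (Fan.mk P u) ⟨i⟩
  simp only [Fan.mk_pt, Fan.mk_π_app] at hA ⊢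
  rw [Category.assoc, hm i, ← Category.assoc, hA]
  exact hu i

section GeneratorKernelPair

variable {ι : Type v} (G : ι → C) {X Y : C} (m : X ⟶ Y)

def GenKernelPair : Type v :=
  Σ j, {p : (G j ⟶ X) × (G j ⟶ X) // p.1 ≫ m = p.2 ≫ m}

variable [HasCoproducts.{v} C]

noncomputable def genKernelPairFst : ∐ (fun x : GenKernelPair G m => G x.1) ⟶ X :=
  Sigma.desc fun x => x.2.1.1

noncomputable def genKernelPairSnd : ∐ (fun x : GenKernelPair G m => G x.1) ⟶ X :=
  Sigma.desc fun x => x.2.1.2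

theorem genKernelPair_condition : genKernelPairFst G m ≫ m = genKernelPairSnd G m ≫ m :=
  Sigma.hom_ext _ _ fun x => by simpa [genKernelPairFst, genKernelPairSnd] using x.2.2

theorem comp_eq_of_genKernelPair {Z : C} (f : X ⟶ Z)
    (hf : genKernelPairFst G m ≫ f = genKernelPairSnd G m ≫ f) {j : ι} (u v : G j ⟶ X)
    (huv : u ≫ m = v ≫ m) : u ≫ f = v ≫ f := by
  have := Sigma.ι (fun x : GenKernelPair G m => G x.1) ⟨j, (u, v), huv⟩ ≫= hf
  simpa [genKernelPairFst, genKernelPairSnd] using this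

end GeneratorKernelPair

section RegProjectiveGenerator

variable {ι : Type v} {G : ι → C} (hdet : ObjectProperty.IsDetecting (Set.range G))
  (hproj : ∀ j, RegProjective (G j))
include hdet hproj

theorem isIso_of_regEpi_comp {X Q Y : C} {π : X ⟶ Q} (hπ : IsRegEpi π) (t : Q ⟶ Y)
    (hlift : ∀ j (g : G j ⟶ Y), ∃ u : G j ⟶ X, u ≫ π ≫ t = g)
    (hker : ∀ j (u v : G j ⟶ X), u ≫ π ≫ t = v ≫ π ≫ t → u ≫ π = v ≫ π) :
    IsIso t := by
  refine hdet t ?_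
  rintro _ ⟨j, rfl⟩ g
  obtain ⟨u, hu⟩ := hlift j g
  refine ⟨u ≫ π, by simpa using hu, fun w (hw : w ≫ t = g) => ?_⟩
  obtain ⟨v, rfl : v ≫ π = w⟩ := hproj j π hπ w
  exact hker j v u (by simpa [hu] using hw)

theorem isRegEpi_of_forall_exists_lift [HasCoproducts.{v} C] [HasCoequalizers C]
    {X Y : C} (m : X ⟶ Y) (hlift : ∀ j (g : G j ⟶ Y), ∃ u : G j ⟶ X, u ≫ m = g) :
    IsRegEpi m := by
  let a := genKernelPairFst G m
  let b := genKernelPairSnd G m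
  let t : coequalizer a b ⟶ Y := coequalizer.desc m (genKernelPair_condition G m)
  have hπt : coequalizer.π a b ≫ t = m := coequalizer.π_desc _ _
  have : IsIso t := isIso_of_regEpi_comp hdet hproj ⟨coequalizerRegular a b⟩ t
    (by simpa only [hπt] using hlift)
    (fun j u v huv => comp_eq_of_genKernelPair G m _ (coequalizer.condition a b) u v
      (by simpa only [hπt] using huv))
  rw [← hπt]
  exact (MorphismProperty.RespectsIso.postcomp (MorphismProperty.regularEpi C) t _
    (isRegularEpi_of_regularEpi (coequalizerRegular a b))).regularEpi

end RegProjectiveGenerator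

/-- In a finitary quasivariety, regular epimorphisms are closed under
small products: given a family of regular epimorphisms `e i : A i ⟶ B i`, products
`PA` of the `A i` and `PB` of the `B i`, the induced morphism `PA ⟶ PB` is a
regular epimorphism. -/
theorem statement3 (K : Type u) [Category.{v} K] (hK : IsFinitaryQuasivariety K)
    (ι : Type v) (A B : ι → K) (e : ∀ i, A i ⟶ B i) (he : ∀ i, IsRegEpi (e i))
    (PA PB : K) (pA : ∀ i, PA ⟶ A i) (pB : ∀ i, PB ⟶ B i)
    (hPA : Nonempty (IsLimit (Fan.mk PA pA))) (hPB : Nonempty (IsLimit (Fan.mk PB pB)))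
    (m : PA ⟶ PB) (hm : ∀ i, m ≫ pB i = pA i ≫ e i) :
    IsRegEpi m := by
  obtain ⟨ι', G, hdet, hG⟩ := hK.exists_generator
  have : HasColimitsOfSize.{v, v} K := hK.hasColimits
  obtain ⟨LA⟩ := hPA
  obtain ⟨LB⟩ := hPB
  exact isRegEpi_of_forall_exists_lift hdet (fun j => (hG j).2) m
    fun j => (hG j).2.exists_lift_along_pi he LA LB hm

end Paper
end

section
/- Let K be a finitary quasivariety with small strong generator P consisting of finitely presentable regular projective objects. Then K has enough regular projectives: every object of K admits a regular epimorphism from a regular projective object. Moreover, an object Q of K is regular projective if and only if Q is a retract of a small coproduct of objects of P. -/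
open CategoryTheory CategoryTheory.Limits Opposite

universe w v u

namespace Paper

variable {C : Type u} [Category.{v} C]

/-!
A morphism `e : P ⟶ X` that is surjective on `G`-points is a regular epimorphism: coequalize
all pairs of `G`-points of `P` that `e` identifies. The induced map from this coequalizer to `X`
is still surjective on `G`-points, and it is injective on them because each `G i` is regular
projective, so its points lift through the coequalizer map. As `G` is detecting, the induced map
is an isomorphism. Applied to the coproduct of all `G`-points of `X`, this gives a regular
projective cover of `X`; a regular projective `Q` splits its cover and is therefore a retract of
a coproduct of generators, and conversely such retracts are regular projective.
-/

lemma IsRegEpi.comp_isIso {C : Type u} [Category.{v} C] {X Y Z : C} {f : X ⟶ Y}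
    (hf : IsRegEpi f) (m : Y ⟶ Z) [IsIso m] : IsRegEpi (f ≫ m) :=
  hf.map (RegularEpi.ofArrowIso (Arrow.isoMk (f := Arrow.mk f) (g := Arrow.mk (f ≫ m))
    (Iso.refl X) (asIso m)))

section RegProjective

variable {C : Type u} [Category.{v} C]

lemma RegProjective.of_retract {Q S : C} (hS : RegProjective S) (s : Q ⟶ S) (r : S ⟶ Q)
    (hsr : s ≫ r = 𝟙 Q) : RegProjective Q := by
  intro X Y f hf g
  obtain ⟨h, hh⟩ := hS f hf (r ≫ g)
  refine ⟨s ≫ h, ?_⟩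
  simp only at hh ⊢
  rw [Category.assoc, hh, ← Category.assoc, hsr, Category.id_comp]

lemma RegProjective.of_isColimit_cofan {κ : Type w} {F : κ → C}
    (hF : ∀ k, RegProjective (F k)) {S : C} (c : ∀ k, F k ⟶ S)
    (hc : IsColimit (Cofan.mk S c)) : RegProjective S := by
  intro X Y f hf g
  choose h hh using fun k => hF k f hf (c k ≫ g)
  refine ⟨hc.desc (Cofan.mk X h), hc.hom_ext fun ⟨k⟩ => ?_⟩
  have hdesc := hc.fac (Cofan.mk X h) ⟨k⟩
  simp only [Cofan.mk_ι_app] at hdesc hh ⊢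
  rw [reassoc_of% hdesc, hh]

end RegProjective

section Generators

variable {K : Type u} [Category.{v} K] [HasColimitsOfSize.{v, v} K] {ι : Type v} (G : ι → K)

abbrev IdentifiedPoints {P X : K} (e : P ⟶ X) : Type v :=
  Σ i, {ab : (G i ⟶ P) × (G i ⟶ P) // ab.1 ≫ e = ab.2 ≫ e}

noncomputable abbrev identifiedPointsFst {P X : K} (e : P ⟶ X) :
    (∐ fun r : IdentifiedPoints G e => G r.1) ⟶ P :=
  Sigma.desc fun r => r.2.1.1

noncomputable abbrev identifiedPointsSnd {P X : K} (e : P ⟶ X) :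
    (∐ fun r : IdentifiedPoints G e => G r.1) ⟶ P :=
  Sigma.desc fun r => r.2.1.2

lemma identifiedPointsFst_comp {P X : K} (e : P ⟶ X) :
    identifiedPointsFst G e ≫ e = identifiedPointsSnd G e ≫ e :=
  Sigma.hom_ext _ _ fun r => by simpa using r.2.2

lemma coequalizer_desc_injective_on_points {P X : K} (e : P ⟶ X) {i : ι}
    (hGi : RegProjective (G i)) {a b : G i ⟶ coequalizer (identifiedPointsFst G e)
      (identifiedPointsSnd G e)}
    (hab : a ≫ coequalizer.desc e (identifiedPointsFst_comp G e) =
      b ≫ coequalizer.desc e (identifiedPointsFst_comp G e)) : a = b := by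
  have hπ : IsRegEpi (coequalizer.π (identifiedPointsFst G e) (identifiedPointsSnd G e)) :=
    ⟨coequalizerRegular _ _⟩
  obtain ⟨a', rfl⟩ := hGi _ hπ a
  obtain ⟨b', rfl⟩ := hGi _ hπ b
  simp only [Category.assoc, coequalizer.π_desc] at hab ⊢
  let r : IdentifiedPoints G e := ⟨i, (a', b'), hab⟩
  have hfst : Sigma.ι _ r ≫ identifiedPointsFst G e = a' := Sigma.ι_desc _ _
  have hsnd : Sigma.ι _ r ≫ identifiedPointsSnd G e = b' := Sigma.ι_desc _ _
  rw [← hfst, ← hsnd, Category.assoc, Category.assoc, coequalizer.condition]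

variable {G}

theorem isRegEpi_of_surjective_on_points (hdet : ObjectProperty.IsDetecting (Set.range G))
    (hproj : ∀ i, RegProjective (G i)) {P X : K} (e : P ⟶ X)
    (hsurj : ∀ i (h : G i ⟶ X), ∃ a : G i ⟶ P, a ≫ e = h) : IsRegEpi e := by
  let m := coequalizer.desc e (identifiedPointsFst_comp G e)
  have hm : IsIso m := by
    refine hdet m ?_
    rintro _ ⟨i, rfl⟩ h
    obtain ⟨a, rfl⟩ := hsurj i h
    exact ⟨a ≫ coequalizer.π _ _, by simp [m],
      fun b hb => coequalizer_desc_injective_on_points G e (hproj i) (by simpa [m] using hb)⟩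
  rw [← coequalizer.π_desc e (identifiedPointsFst_comp G e)]
  exact IsRegEpi.comp_isIso ⟨coequalizerRegular _ _⟩ m

variable (G)

noncomputable abbrev pointCover (X : K) : K := ∐ fun p : Σ i, (G i ⟶ X) => G p.1

noncomputable abbrev pointCover.π (X : K) : pointCover G X ⟶ X :=
  Sigma.desc fun p : Σ i, (G i ⟶ X) => p.2

lemma regProjective_pointCover (hproj : ∀ i, RegProjective (G i)) (X : K) :
    RegProjective (pointCover G X) :=
  RegProjective.of_isColimit_cofan (fun p : Σ i, (G i ⟶ X) => hproj p.1) _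
    (coproductIsCoproduct _)

lemma isRegEpi_pointCover_π (hdet : ObjectProperty.IsDetecting (Set.range G))
    (hproj : ∀ i, RegProjective (G i)) (X : K) : IsRegEpi (pointCover.π G X) :=
  isRegEpi_of_surjective_on_points hdet hproj _ fun i h =>
    ⟨Sigma.ι (fun p : Σ i, (G i ⟶ X) => G p.1) ⟨i, h⟩, Sigma.ι_desc _ _⟩

end Generators

theorem statement5_general (K : Type u) [Category.{v} K] [HasColimitsOfSize.{v, v} K]
    (ι : Type v) (G : ι → K) (hdet : ObjectProperty.IsDetecting (Set.range G))
    (hproj : ∀ i, RegProjective (G i)) :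
    (∀ X : K, ∃ (P : K) (f : P ⟶ X), RegProjective P ∧ IsRegEpi f) ∧
    (∀ Q : K, RegProjective Q ↔
      ∃ (κ : Type v) (g : κ → ι) (S : K) (c : ∀ k, G (g k) ⟶ S),
        Nonempty (IsColimit (Cofan.mk S c)) ∧
        ∃ (s : Q ⟶ S) (r : S ⟶ Q), s ≫ r = 𝟙 Q) := by
  refine ⟨fun X => ⟨_, _, regProjective_pointCover G hproj X,
    isRegEpi_pointCover_π G hdet hproj X⟩, fun Q => ⟨fun hQ => ?_, ?_⟩⟩
  · obtain ⟨s, hs⟩ := hQ _ (isRegEpi_pointCover_π G hdet hproj Q) (𝟙 Q)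
    exact ⟨_, Sigma.fst, _, Sigma.ι _, ⟨coproductIsCoproduct _⟩, s, pointCover.π G Q, hs⟩
  · rintro ⟨κ, g, S, c, ⟨hc⟩, s, r, hsr⟩
    exact (RegProjective.of_isColimit_cofan (fun k => hproj (g k)) c hc).of_retract s r hsr

/-- A finitary quasivariety `K`, with small strong generator `G`
consisting of finitely presentable regular projectives, has enough regular
projectives, and an object is regular projective iff it is a retract of a small
coproduct of objects of the generator. -/
theorem statement5 (K : Type u) [Category.{v} K] [HasColimitsOfSize.{v, v} K]
    (ι : Type v) (G : ι → K) (hdet : ObjectProperty.IsDetecting (Set.range G))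
    (hfp : ∀ i, FinPres (G i)) (hproj : ∀ i, RegProjective (G i)) :
    (∀ X : K, ∃ (P : K) (f : P ⟶ X), RegProjective P ∧ IsRegEpi f) ∧
    (∀ Q : K, RegProjective Q ↔
      ∃ (κ : Type v) (g : κ → ι) (S : K) (c : ∀ k, G (g k) ⟶ S),
        Nonempty (IsColimit (Cofan.mk S c)) ∧
        ∃ (s : Q ⟶ S) (r : S ⟶ Q), s ≫ r = 𝟙 Q) :=
  statement5_general K ι G hdet hproj

end Paper
end

section
/- Let K be a cocomplete category which is a finitary quasivariety, with small strong generator P of finitely presentable regular projective objects, and let A be a small category. Then the functor category [A, K] is a finitary quasivariety: a small strong generator consisting of finitely presentable regular projective objects is given by the functors A(a,−) · P (the copower of P by the hom-functor A(a,−)) for a ∈ A and P ∈ P. If K is moreover a finitary variety (i.e. exact), then so is [A, K]. -/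
/-!
Evaluation at `a` has the left adjoint `P ↦ A(a,-) · P`: morphisms `A(a,-) · P ⟶ F` correspond
naturally to morphisms `P ⟶ F a`. Colimits in `A ⥤ K` are computed pointwise, and so are regular
epimorphisms, so finite presentability, regular projectivity and the detection of isomorphisms pass
from the `G i` to the copowers `A(a,-) · G i`. For exactness, testing an equivalence relation of
functors against copowers shows that it is pointwise an equivalence relation; pointwise it is then
the kernel pair of its coequalizer, and kernel pairs in `A ⥤ K` are detected pointwise.
-/

open CategoryTheory CategoryTheory.Limits Opposite

universe w v u

namespace Paper

variable {C : Type u} [Category.{v} C]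

/-- The copower `A(a,-) · P`: the functor `A ⥤ K` sending `b` to the coproduct of
copies of `P` indexed by `a ⟶ b`. -/
noncomputable def homCopower {K : Type u} [Category.{v} K] [HasColimitsOfSize.{v, v} K]
    {A : Type v} [SmallCategory A] (a : A) (P : K) : A ⥤ K where
  obj b := ∐ (fun (_ : a ⟶ b) => P)
  map {b c} f := Sigma.desc (fun g => Sigma.ι (fun (_ : a ⟶ c) => P) (g ≫ f))
  map_id b := by
    ext g
    simp
  map_comp {b c d} f g := by
    ext h
    simp

section RegularEpi

variable {A K : Type*} [Category A] [Category K]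

theorem hasColimit_parallelPair_flip_obj {R X : A ⥤ K} {p q : R ⟶ X} (a : A)
    [HasCoequalizer (p.app a) (q.app a)] : HasColimit ((parallelPair p q).flip.obj a) :=
  hasColimit_of_iso (F := parallelPair (p.app a) (q.app a)) (diagramIsoParallelPair _)

theorem isRegEpi_app_of_isColimit {R X Y : A ⥤ K} {p q : R ⟶ X} {f : X ⟶ Y}
    {w : p ≫ f = q ≫ f} (hf : IsColimit (Cofork.ofπ f w))
    (hpq : ∀ a, HasCoequalizer (p.app a) (q.app a)) (a : A) : IsRegEpi (f.app a) := by
  have := fun a => haveI := hpq a; hasColimit_parallelPair_flip_obj (p := p) (q := q) a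
  exact ⟨Cofork.IsColimit.regularEpi
    (isColimitCoforkMapOfIsColimit ((evaluation A K).obj a) w hf)⟩

theorem isRegEpi_of_forall_app [HasPullbacks K] {X Y : A ⥤ K} {f : X ⟶ Y}
    (h : ∀ a, IsRegEpi (f.app a)) : IsRegEpi f := by
  have hk := IsKernelPair.of_hasPullback f
  exact ⟨Cofork.IsColimit.regularEpi (evaluationJointlyReflectsColimits _ fun a =>
    (isColimitMapCoconeCoforkEquiv _ hk.w).symm
      (IsKernelPair.toCoequalizer (hk.app a) (h a).some))⟩

theorem IsKernelPair.of_isColimit {R X Y Q : K} {p q : R ⟶ X} {f : X ⟶ Y}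
    (hk : IsKernelPair f p q) {e : X ⟶ Q} {w : p ≫ e = q ≫ e}
    (he : IsColimit (Cofork.ofπ e w)) : IsKernelPair e p q :=
  have hf : e ≫ Cofork.IsColimit.desc he f hk.w = f := Cofork.IsColimit.π_desc' he f hk.w
  CategoryTheory.IsKernelPair.cancel_right w (hf ▸ hk)

end RegularEpi

namespace IsRegularCategory

variable {A K : Type*} [Category A] [Category K] (hK : IsRegularCategory K)
include hK

theorem hasCoequalizer_app {R X Y : A ⥤ K} {f : X ⟶ Y} {p q : R ⟶ X}
    (hk : IsKernelPair f p q) (a : A) : HasCoequalizer (p.app a) (q.app a) :=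
  haveI := hK.hasFiniteLimits
  hK.hasCoequalizersOfKernelPairs _ _ _ (hk.app a)

theorem isRegEpi_app {X Y : A ⥤ K} {f : X ⟶ Y} (hf : IsRegEpi f) (a : A) :
    IsRegEpi (f.app a) :=
  haveI := hK.hasFiniteLimits
  have hk := IsKernelPair.of_hasPullback f
  isRegEpi_app_of_isColimit (hk.toCoequalizer hf.some) (hK.hasCoequalizer_app hk) a

theorem functorCategory : IsRegularCategory (A ⥤ K) :=
  haveI := hK.hasFiniteLimits
  { hasFiniteLimits := inferInstance
    hasCoequalizersOfKernelPairs := fun f p q hk => by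
      have := fun a => haveI := hK.hasCoequalizer_app hk a
        hasColimit_parallelPair_flip_obj (p := p) (q := q) a
      infer_instance
    regEpiPullbackStable := fun _ _ _ _ hpb hf =>
      isRegEpi_of_forall_app fun a =>
        hK.regEpiPullbackStable _ _ _ _ (hpb.app a) (hK.isRegEpi_app hf a) }

end IsRegularCategory

section HomCopower

variable {K : Type u} [Category.{v} K] [HasColimitsOfSize.{v, v} K] {A : Type v} [SmallCategory A]

noncomputable def homCopowerHomEquiv (a : A) (P : K) (F : A ⥤ K) :
    (homCopower a P ⟶ F) ≃ (P ⟶ F.obj a) where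
  toFun η := Sigma.ι (fun (_ : a ⟶ a) => P) (𝟙 a) ≫ η.app a
  invFun g :=
    { app := fun b => Sigma.desc fun h : a ⟶ b => g ≫ F.map h
      naturality := fun b c f => by
        dsimp [homCopower]
        ext h
        simp }
  left_inv η := by
    ext b : 2
    refine Sigma.hom_ext _ _ fun h => ?_
    simpa [homCopower] using (Sigma.ι _ (𝟙 a) ≫= η.naturality h).symm
  right_inv g := by
    simp

variable {a : A} {P : K}

theorem homCopowerHomEquiv_comp {F F' : A ⥤ K} (η : homCopower a P ⟶ F) (μ : F ⟶ F') :
    homCopowerHomEquiv a P F' (η ≫ μ) = homCopowerHomEquiv a P F η ≫ μ.app a :=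
  (Category.assoc _ _ _).symm

theorem homCopowerHomEquiv_symm_comp {F F' : A ⥤ K} (g : P ⟶ F.obj a) (μ : F ⟶ F') :
    (homCopowerHomEquiv a P F).symm g ≫ μ = (homCopowerHomEquiv a P F').symm (g ≫ μ.app a) := by
  rw [Equiv.eq_symm_apply, homCopowerHomEquiv_comp, Equiv.apply_symm_apply]

theorem comp_eq_homCopowerHomEquiv_symm_iff {F F' : A ⥤ K} (η : homCopower a P ⟶ F)
    (μ : F ⟶ F') (g : P ⟶ F'.obj a) :
    η ≫ μ = (homCopowerHomEquiv a P F').symm g ↔ homCopowerHomEquiv a P F η ≫ μ.app a = g := by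
  rw [Equiv.eq_symm_apply, homCopowerHomEquiv_comp]

variable (a P) in
noncomputable def coyonedaHomCopowerIso :
    coyoneda.obj (op (homCopower (A := A) a P)) ≅ (evaluation A K).obj a ⋙ coyoneda.obj (op P) :=
  NatIso.ofComponents (fun F => (homCopowerHomEquiv a P F).toIso) fun μ => by
    ext η
    exact homCopowerHomEquiv_comp η μ

theorem FinPres.homCopower (hP : FinPres P) (a : A) : FinPres (homCopower a P) := by
  intro J _ hJ
  have := hP J _ hJ
  exact preservesColimitsOfShape_of_natIso (coyonedaHomCopowerIso a P).symm

theorem RegProjective.homCopower (hP : RegProjective P) (a : A) :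
    RegProjective (homCopower a P) := by
  rintro X Y f ⟨hf⟩ g
  have hfa : IsRegEpi (f.app a) := isRegEpi_app_of_isColimit hf.isColimit (fun _ => inferInstance) a
  obtain ⟨g', hg'⟩ := hP (f.app a) hfa (homCopowerHomEquiv a P Y g)
  exact ⟨(homCopowerHomEquiv a P X).symm g', by
    simp only [homCopowerHomEquiv_symm_comp, hg', Equiv.symm_apply_apply]⟩

theorem isDetecting_range_homCopower {ι : Type*} {G : ι → K}
    (hG : ObjectProperty.IsDetecting (Set.range G)) :
    ObjectProperty.IsDetecting (Set.range fun p : A × ι => homCopower p.1 (G p.2)) := by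
  intro X Y f hf
  suffices ∀ a, IsIso (f.app a) from NatIso.isIso_of_isIso_app f
  intro a
  refine hG (f.app a) ?_
  rintro _ ⟨i, rfl⟩ g
  have := hf _ ⟨(a, i), rfl⟩ ((homCopowerHomEquiv a (G i) Y).symm g)
  exact (Equiv.existsUnique_congr _ fun η => comp_eq_homCopowerHomEquiv_symm_iff η f g).1 this

theorem IsEquivalenceRelationPair.app {R X : A ⥤ K} {p q : R ⟶ X}
    (h : IsEquivalenceRelationPair p q) (a : A) :
    IsEquivalenceRelationPair (p.app a) (q.app a) where
  jointly_mono {Z} r s hp hq := by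
    apply (homCopowerHomEquiv a Z R).symm.injective
    apply h.jointly_mono <;> simp only [homCopowerHomEquiv_symm_comp, hp, hq]
  refl {Z} x := by
    obtain ⟨r, hp, hq⟩ := h.refl ((homCopowerHomEquiv a Z X).symm x)
    exact ⟨homCopowerHomEquiv a Z R r, by
      simp only [← homCopowerHomEquiv_comp, hp, hq, Equiv.apply_symm_apply, and_self]⟩
  symm {Z} r := by
    obtain ⟨s, hp, hq⟩ := h.symm ((homCopowerHomEquiv a Z R).symm r)
    exact ⟨homCopowerHomEquiv a Z R s, by
      simp only [← homCopowerHomEquiv_comp, hp, hq, homCopowerHomEquiv_symm_comp,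
        Equiv.apply_symm_apply, and_self]⟩
  trans {Z} r s hrs := by
    obtain ⟨t, hp, hq⟩ := h.trans ((homCopowerHomEquiv a Z R).symm r)
      ((homCopowerHomEquiv a Z R).symm s) (by simp only [homCopowerHomEquiv_symm_comp, hrs])
    exact ⟨homCopowerHomEquiv a Z R t, by
      simp only [← homCopowerHomEquiv_comp, hp, hq, homCopowerHomEquiv_symm_comp,
        Equiv.apply_symm_apply, and_self]⟩

theorem IsExactCategory.functorCategory (hK : IsExactCategory K) : IsExactCategory (A ⥤ K) where
  toIsRegularCategory := hK.toIsRegularCategory.functorCategory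
  effectiveEquivalenceRelations p q hpq := by
    refine ⟨coequalizer p q, coequalizer.π p q, IsPullback.of_forall_isPullback_app fun a => ?_⟩
    obtain ⟨_, _, hk⟩ := hK.effectiveEquivalenceRelations _ _ (hpq.app a)
    exact IsKernelPair.of_isColimit hk (isColimitCoforkMapOfIsColimit ((evaluation A K).obj a) _
      (coequalizerIsCoequalizer p q))

end HomCopower

/-- If `K` is a finitary quasivariety with small strong generator `G`
of finitely presentable regular projectives and `A` is a small category, then the
functor category `A ⥤ K` is a finitary quasivariety, with small strong generator
given by the copowers `A(a,-) · G i`; and if `K` is moreover exact (a finitary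
variety), then so is `A ⥤ K`. -/
theorem statement6 (K : Type u) [Category.{v} K] [HasColimitsOfSize.{v, v} K]
    (ι : Type v) (G : ι → K) (hdet : ObjectProperty.IsDetecting (Set.range G))
    (hfp : ∀ i, FinPres (G i)) (hproj : ∀ i, RegProjective (G i))
    (A : Type v) [SmallCategory A] :
    (ObjectProperty.IsDetecting (Set.range (fun p : A × ι => homCopower p.1 (G p.2))) ∧
      (∀ (a : A) (i : ι),
        FinPres (homCopower (K := K) a (G i)) ∧ RegProjective (homCopower (K := K) a (G i))) ∧
      IsFinitaryQuasivariety (A ⥤ K)) ∧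
    (IsExactCategory K → IsExactCategory (A ⥤ K)) := by
  have hdetA := isDetecting_range_homCopower (A := A) hdet
  have hgenA (a : A) (i : ι) :
      FinPres (homCopower (K := K) a (G i)) ∧ RegProjective (homCopower (K := K) a (G i)) :=
    ⟨(hfp i).homCopower a, (hproj i).homCopower a⟩
  exact ⟨⟨hdetA, hgenA, inferInstance, A × ι, _, hdetA, fun p => hgenA p.1 p.2⟩,
    IsExactCategory.functorCategory⟩

end Paper
end

section
/- Let C be a small category with finite products, equipped with a symmetric monoidal structure (⊗, I) such that − ⊗ − : C × C → C preserves finite products in each variable separately. For every c ∈ C and every finite-product-preserving functor F : C → Set, the Day convolution internal hom [Y(c), F] in [C, Set], where Y(c) = C(c, −), is isomorphic to the functor F(− ⊗ c), and hence preserves finite products. More generally, for an arbitrary functor G : C → Set and a finite-product-preserving F : C → Set, the internal hom [G, F] preserves finite products. -/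
open CategoryTheory CategoryTheory.Limits Opposite

universe w v u

namespace Paper

variable {C : Type u} [Category.{v} C]

open MonoidalCategory

/-- The external product of two `Type`-valued functors. -/
def externalProd {C : Type v} [SmallCategory C] (F G : C ⥤ Type v) :
    C × C ⥤ Type v where
  obj x := F.obj x.1 × G.obj x.2
  map f := TypeCat.ofHom fun p => (F.map f.1 p.1, G.map f.2 p.2)
  map_id x := by
    ext p
    · change F.map (𝟙 x.1) p.1 = p.1
      simp
    · change G.map (𝟙 x.2) p.2 = p.2
      simp
  map_comp f g := by
    ext p
    · change F.map (f.1 ≫ g.1) p.1 = F.map g.1 (F.map f.1 p.1)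
      simp
    · change G.map (f.2 ≫ g.2) p.2 = G.map g.2 (G.map f.2 p.2)
      simp

/-- The tensor product, as a functor `C × C ⥤ C`. -/
def tensorF (C : Type v) [SmallCategory C] [MonoidalCategory C] : C × C ⥤ C :=
  Functor.uncurry.obj (curriedTensor C)

/-- Whiskering of the external product in the first variable. -/
def externalWhisker {C : Type v} [SmallCategory C] {H H' : C ⥤ Type v} (φ : H ⟶ H')
    (G : C ⥤ Type v) : externalProd H G ⟶ externalProd H' G where
  app x := TypeCat.ofHom fun p => (φ.app x.1 p.1, p.2)
  naturality x y f := by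
    ext p
    apply Prod.ext
    · exact (NatTrans.naturality_apply φ f.1 (show H.obj x.1 from p.1) : _)
    · rfl

/-- The functor `(C ⥤ Set)ᵒᵖ ⥤ Set` sending `H` to the set of natural
transformations `H ⊠ G ⟶ (⊗ ⋙ F)`; by the universal property of the Day
convolution (a left Kan extension along `⊗`), this set is in natural bijection
with `Hom(H ⊗_{Day} G, F)`, so a representing object for this functor is exactly
the Day-convolution internal hom `[G, F]`. -/
def dayHomFunctor {C : Type v} [SmallCategory C] [MonoidalCategory C]
    (G F : C ⥤ Type v) : (C ⥤ Type v)ᵒᵖ ⥤ Type v where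
  obj H := externalProd H.unop G ⟶ tensorF C ⋙ F
  map ψ := TypeCat.ofHom fun β => externalWhisker ψ.unop G ≫ β
  map_id H := by
    ext β x p
    rfl
  map_comp ψ ψ' := by
    ext β x p
    rfl

/-!
The Day internal hom is given by the end formula `[G, F](c) = Nat(G, F(c ⊗ -))`: currying
identifies `Nat(H ⊠ G, F ∘ ⊗)` with `Nat(H, [G, F])`, so every representing object is
isomorphic to it. Limits in `C ⥤ Set` are computed pointwise, so `c ↦ F(c ⊗ -)` preserves
finite products as soon as each `F(- ⊗ d)` does, and `Nat(G, -)` preserves all limits; hence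
so does `[G, F]`. For `G = Y(c)` the Yoneda lemma gives `[Y(c), F] ≅ F(- ⊗ c)`.
-/

lemma preservesFiniteProducts_of_natIso {C : Type*} {D : Type*} [Category C] [Category D]
    {F G : C ⥤ D} (e : F ≅ G) [PreservesFiniteProducts F] : PreservesFiniteProducts G where
  preserves _ := preservesLimitsOfShape_of_natIso e

section DayInternalHom

variable {C : Type v} [SmallCategory C] [MonoidalCategory C]

def tensorLeftComp (F : C ⥤ Type v) : C ⥤ C ⥤ Type v :=
  curriedTensor C ⋙ (Functor.whiskeringRight C C (Type v)).obj F

def dayInternalHom (G F : C ⥤ Type v) : C ⥤ Type v :=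
  tensorLeftComp F ⋙ coyoneda.obj (op G)

def uncurryDayHom {H G F : C ⥤ Type v} (φ : H ⟶ dayInternalHom G F) :
    externalProd H G ⟶ tensorF C ⋙ F where
  app x := TypeCat.ofHom fun p => (φ.app x.1 p.1).app x.2 p.2
  naturality := by
    rintro ⟨c, d⟩ ⟨c', d'⟩ ⟨f₁, f₂⟩
    ext ⟨h, g⟩
    have h1 := NatTrans.naturality_apply φ f₁ h
    dsimp [dayInternalHom, tensorLeftComp, externalProd, tensorF] at h1 ⊢
    rw [h1]
    change (Functor.whiskerRight ((curriedTensor C).map f₁) F).app d'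
      ((φ.app c h).app d' (G.map f₂ g)) = _
    have h2 := NatTrans.naturality_apply (φ.app c h) f₂ g
    dsimp [tensorLeftComp] at h2 ⊢
    rw [h2, ← whisker_exchange, Functor.map_comp_apply]
    rfl

def curryDayHom {H G F : C ⥤ Type v} (β : externalProd H G ⟶ tensorF C ⋙ F) :
    H ⟶ dayInternalHom G F where
  app c := TypeCat.ofHom fun h =>
    { app := fun d => TypeCat.ofHom fun g => β.app (c, d) ((h, g) : H.obj c × G.obj d)
      naturality := fun d d' f₂ => by
        ext g
        have := NatTrans.naturality_apply β ((𝟙 c, f₂) : (c, d) ⟶ (c, d'))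
          ((h, g) : H.obj c × G.obj d)
        simp [externalProd, tensorF] at this
        exact this }
  naturality c c' f₁ := by
    ext h
    apply NatTrans.ext
    ext d g
    have := NatTrans.naturality_apply β ((f₁, 𝟙 d) : (c, d) ⟶ (c', d))
      ((h, g) : H.obj c × G.obj d)
    simp [externalProd, tensorF] at this
    exact this

def dayInternalHomRepresentableBy (G F : C ⥤ Type v) :
    (dayHomFunctor G F).RepresentableBy (dayInternalHom G F) where
  homEquiv :=
    { toFun := uncurryDayHom
      invFun := curryDayHom
      left_inv _ := rfl
      right_inv _ := rfl }
  homEquiv_comp _ _ := rfl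

def dayInternalHomCoyonedaIso (F : C ⥤ Type v) (c : C) :
    dayInternalHom (coyoneda.obj (op c)) F ≅ tensorRight c ⋙ F :=
  Functor.isoWhiskerLeft (tensorLeftComp F) (curriedCoyonedaLemma.app c)

lemma preservesFiniteProducts_tensorLeftComp
    (htr : ∀ d : C, PreservesFiniteProducts (tensorRight d))
    (F : C ⥤ Type v) [PreservesFiniteProducts F] :
    PreservesFiniteProducts (tensorLeftComp F) where
  preserves _ := preservesLimitsOfShape_of_evaluation _ _ fun d =>
    inferInstanceAs (PreservesLimitsOfShape _ (tensorRight d ⋙ F))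

lemma preservesFiniteProducts_dayInternalHom
    (htr : ∀ d : C, PreservesFiniteProducts (tensorRight d))
    (G F : C ⥤ Type v) [PreservesFiniteProducts F] :
    PreservesFiniteProducts (dayInternalHom G F) :=
  have := preservesFiniteProducts_tensorLeftComp htr F
  comp_preservesFiniteProducts (tensorLeftComp F) (coyoneda.obj (op G))

lemma preservesFiniteProducts_of_dayHomFunctor_representableBy
    (htr : ∀ d : C, PreservesFiniteProducts (tensorRight d))
    (F : C ⥤ Type v) [PreservesFiniteProducts F] {G T : C ⥤ Type v}
    (hT : (dayHomFunctor G F).RepresentableBy T) : PreservesFiniteProducts T :=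
  have := preservesFiniteProducts_dayInternalHom htr G F
  preservesFiniteProducts_of_natIso ((dayInternalHomRepresentableBy G F).uniqueUpToIso hT)

end DayInternalHom

theorem statement8_general (C : Type v) [SmallCategory C]
    [MonoidalCategory C]
    (htr : ∀ c : C, PreservesFiniteProducts (tensorRight c))
    (F : C ⥤ Type v) (hF : PreservesFiniteProducts F) :
    (∀ (c : C) (T : C ⥤ Type v),
      (dayHomFunctor (coyoneda.obj (op c)) F).RepresentableBy T →
        Nonempty (T ≅ tensorRight c ⋙ F) ∧ PreservesFiniteProducts T) ∧
    (∀ (G T : C ⥤ Type v),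
      (dayHomFunctor G F).RepresentableBy T → PreservesFiniteProducts T) :=
  ⟨fun c _ hT =>
    ⟨⟨hT.uniqueUpToIso (dayInternalHomRepresentableBy _ F) ≪≫ dayInternalHomCoyonedaIso F c⟩,
      preservesFiniteProducts_of_dayHomFunctor_representableBy htr F hT⟩,
    fun _ _ => preservesFiniteProducts_of_dayHomFunctor_representableBy htr F⟩

/-- With `C` small, finite-product-complete and symmetric monoidal
with tensor preserving finite products in each variable, and `F : C ⥤ Set`
preserving finite products: the Day-convolution internal hom `[Y(c), F]` (any
representing object `T` of the functor `H ↦ Hom(H ⊗ Y(c), F)`) is isomorphic to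
`F(- ⊗ c)` and preserves finite products; and more generally, for any
`G : C ⥤ Set`, the internal hom `[G, F]` preserves finite products. -/
theorem statement8 (C : Type v) [SmallCategory C] [HasFiniteProducts C]
    [MonoidalCategory C] [SymmetricCategory C]
    (htl : ∀ c : C, PreservesFiniteProducts (tensorLeft c))
    (htr : ∀ c : C, PreservesFiniteProducts (tensorRight c))
    (F : C ⥤ Type v) (hF : PreservesFiniteProducts F) :
    (∀ (c : C) (T : C ⥤ Type v),
      (dayHomFunctor (coyoneda.obj (op c)) F).RepresentableBy T →
        Nonempty (T ≅ tensorRight c ⋙ F) ∧ PreservesFiniteProducts T) ∧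
    (∀ (G T : C ⥤ Type v),
      (dayHomFunctor G F).RepresentableBy T → PreservesFiniteProducts T) :=
  statement8_general C htr F hF

end Paper
end

section
/- Let V = (V₀, ⊗, I) be a symmetric monoidal finitary quasivariety. Then the regular projective objects of V₀ are closed under the tensor product: if P and Q are regular projective then P ⊗ Q is regular projective. Consequently, the finitely presentable regular projective objects of V₀ are closed under ⊗. -/
open CategoryTheory CategoryTheory.Limits CategoryTheory.MonoidalCategory Opposite

universe w v u

namespace Paper

variable {C : Type u} [Category.{v} C]

/-- A symmetric monoidal finitary quasivariety: a symmetric monoidal closed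
category whose underlying category is a finitary quasivariety with a small strong
generator `G` of finitely presentable regular projectives, with finitely
presentable unit, and such that tensor products of generators are finitely
presentable and regular projective. -/
structure IsSMFinitaryQuasivariety (V : Type u) [Category.{v} V] [MonoidalCategory V]
    [SymmetricCategory V] [MonoidalClosed V] : Prop where
  hasColimits : HasColimitsOfSize.{v, v} V
  exists_generator : ∃ (ι : Type v) (G : ι → V),
    ObjectProperty.IsDetecting (Set.range G) ∧ (∀ i, FinPres (G i) ∧ RegProjective (G i)) ∧
    (∀ i j, FinPres (G i ⊗ G j) ∧ RegProjective (G i ⊗ G j))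
  unit_fp : FinPres (𝟙_ V)

/-!
A regular projective `P` is a retract of a coproduct of generators: the canonical map
`∐_{g : G i ⟶ P} G i ⟶ P` is a regular epimorphism, namely the coequalizer of all pairs of
maps `G j ⟶ ∐ …` that it identifies, because the generators detect isomorphisms and are
themselves regular projective. As `⊗` preserves coproducts in each variable, `P ⊗ Q` is then a
retract of a coproduct of objects `G i ⊗ G j`.

For finite presentability, `Hom(Q ⊗ P, -) ≅ Hom(P, [Q, -])`, and `[Q, -]` preserves filtered
colimits as soon as every `Q ⊗ G i` is finitely presentable, since this can be tested on the
detecting family of finitely presentable generators. Applied first to `Q = G j`, this shows that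
`Q ⊗ G j` is finitely presentable for every finitely presentable `Q`.
-/

section RegProjective

variable {C : Type u} [Category.{v} C]

lemma RegProjective.of_retract_s9 {P P' : C} (h : Retract P P') (hP' : RegProjective P') :
    RegProjective P := by
  intro X Y f hf g
  obtain ⟨l, hl⟩ := hP' f hf (h.r ≫ g)
  refine ⟨h.i ≫ l, ?_⟩
  simp only at hl ⊢
  rw [Category.assoc, hl, h.retract_assoc]

lemma RegProjective.of_iso {P P' : C} (e : P ≅ P') (hP' : RegProjective P') : RegProjective P :=
  hP'.of_retract_s9 e.retract

lemma RegProjective.sigma {σ : Type w} (A : σ → C) [HasCoproduct A]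
    (hA : ∀ x, RegProjective (A x)) : RegProjective (∐ A) := by
  intro X Y f hf g
  choose l hl using fun x => hA x f hf (Sigma.ι A x ≫ g)
  exact ⟨Sigma.desc l, Sigma.hom_ext _ _ fun x => by simpa using hl x⟩

lemma RegProjective.obj_sigma {D : Type*} [Category D] (F : D ⥤ C) {σ : Type w} (A : σ → D)
    [HasCoproduct A] [HasCoproduct fun x => F.obj (A x)] [PreservesColimitsOfShape (Discrete σ) F]
    (h : ∀ x, RegProjective (F.obj (A x))) : RegProjective (F.obj (∐ A)) :=
  (RegProjective.sigma _ h).of_iso (asIso (sigmaComparison F A)).symm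

lemma isIso_of_bijective_precomp {ι : Type*} {G : ι → C}
    (hG : ObjectProperty.IsDetecting (Set.range G)) {X Y : C} (f : X ⟶ Y)
    (h : ∀ i, Function.Bijective fun g : G i ⟶ X => g ≫ f) : IsIso f :=
  hG f (by rintro _ ⟨i, rfl⟩; exact (h i).existsUnique)

lemma isRegEpi_of_forall_lift [HasCoproducts.{v} C] [HasCoequalizers C] {ι : Type v} {G : ι → C}
    (hG : ObjectProperty.IsDetecting (Set.range G)) (hGrp : ∀ i, RegProjective (G i))
    {A X : C} (f : A ⟶ X) (hf : ∀ i (g : G i ⟶ X), ∃ l, l ≫ f = g) : IsRegEpi f := by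
  let τ := Σ i, {uv : (G i ⟶ A) × (G i ⟶ A) // uv.1 ≫ f = uv.2 ≫ f}
  let u : (∐ fun y : τ => G y.1) ⟶ A := Sigma.desc fun y => y.2.1.1
  let v : (∐ fun y : τ => G y.1) ⟶ A := Sigma.desc fun y => y.2.1.2
  have huv : u ≫ f = v ≫ f := Sigma.hom_ext _ _ fun y => by simpa [u, v] using y.2.2
  let m : coequalizer u v ⟶ X := coequalizer.desc f huv
  have hm : IsIso m := by
    refine isIso_of_bijective_precomp hG m fun i => ⟨fun t t' htt' => ?_, fun g => ?_⟩
    · obtain ⟨α, rfl⟩ := hGrp i _ ⟨coequalizerRegular u v⟩ t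
      obtain ⟨α', rfl⟩ := hGrp i _ ⟨coequalizerRegular u v⟩ t'
      have hαα' : α ≫ f = α' ≫ f := by simpa [m] using htt'
      simpa [u, v] using
        Sigma.ι (fun y : τ => G y.1) ⟨i, (α, α'), hαα'⟩ ≫= coequalizer.condition u v
    · obtain ⟨l, rfl⟩ := hf i g
      exact ⟨l ≫ coequalizer.π u v, by simp [m]⟩
  exact ⟨RegularEpi.ofArrowIso (Arrow.isoMk (Iso.refl A) (asIso m) (by simp [m]))
    (coequalizerRegular u v)⟩

lemma RegProjective.exists_retract_sigma [HasCoproducts.{v} C] [HasCoequalizers C] {ι : Type v}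
    {G : ι → C} (hG : ObjectProperty.IsDetecting (Set.range G))
    (hGrp : ∀ i, RegProjective (G i)) {P : C} (hP : RegProjective P) :
    ∃ (σ : Type v) (a : σ → ι), Nonempty (Retract P (∐ fun x => G (a x))) := by
  let e : (∐ fun x : Σ i, (G i ⟶ P) => G x.1) ⟶ P := Sigma.desc Sigma.snd
  have he : IsRegEpi e :=
    isRegEpi_of_forall_lift hG hGrp e fun i g =>
      ⟨Sigma.ι (fun x : Σ i, (G i ⟶ P) => G x.1) ⟨i, g⟩, by simp [e]⟩
  obtain ⟨s, hs⟩ := hP e he (𝟙 P)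
  exact ⟨_, Sigma.fst, ⟨s, e, hs⟩⟩

end RegProjective

section FinPres

variable {C : Type u} [Category.{v} C] {D : Type*} [Category.{v} D]

lemma FinPres.of_iso {A B : C} (e : A ≅ B) (h : FinPres A) : FinPres B := by
  intro J _ hJ
  have := h J ‹_› hJ
  exact preservesColimitsOfShape_of_natIso (coyoneda.mapIso e.op).symm

lemma FinPres.obj_of_adjunction {F : C ⥤ D} {R : D ⥤ C} (adj : F ⊣ R)
    (hR : ∀ (J : Type v) [SmallCategory J], IsFiltered J → PreservesColimitsOfShape J R)
    {A : C} (hA : FinPres A) : FinPres (F.obj A) := by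
  intro J _ hJ
  have := hR J hJ
  have := hA J ‹_› hJ
  exact preservesColimitsOfShape_of_natIso
    (F := R ⋙ coyoneda.obj (op A)) (adj.compCoyonedaIso.app (op A)).symm

lemma preservesColimitsOfShape_of_isDetecting {F : C ⥤ D} {R : D ⥤ C} (adj : F ⊣ R)
    {ι : Type*} {S : ι → C} (hS : ObjectProperty.IsDetecting (Set.range S))
    (hSfp : ∀ i, FinPres (S i)) (hFS : ∀ i, FinPres (F.obj (S i)))
    (J : Type v) [SmallCategory J] (hJ : IsFiltered J) [HasColimitsOfShape J C]
    [HasColimitsOfShape J D] : PreservesColimitsOfShape J R := by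
  constructor
  intro K
  have hpost (i) : IsIso ((coyoneda.obj (op (S i))).map (colimit.post K R)) := by
    have := hSfp i J ‹_› hJ
    have := hFS i J ‹_› hJ
    have : PreservesColimit K (R ⋙ coyoneda.obj (op (S i))) :=
      preservesColimit_of_natIso K (adj.compCoyonedaIso.app (op (S i)))
    have : IsIso (colimit.post (K ⋙ R) (coyoneda.obj (op (S i))) ≫
        (coyoneda.obj (op (S i))).map (colimit.post K R)) := by
      rw [colimit.post_post]
      infer_instance
    exact IsIso.of_isIso_comp_left (colimit.post (K ⋙ R) _) _
  have : IsIso (colimit.post K R) :=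
    isIso_of_bijective_precomp hS _ fun i => (isIso_iff_bijective _).mp (hpost i)
  exact preservesColimit_of_isIso_post (F := K) (G := R)

end FinPres

section Monoidal

variable {V : Type u} [Category.{v} V] [MonoidalCategory V]

def Retract.tensor {X Y X' Y' : V} (h : Retract X Y) (h' : Retract X' Y') :
    Retract (X ⊗ X') (Y ⊗ Y') where
  i := h.i ⊗ₘ h'.i
  r := h.r ⊗ₘ h'.r
  retract := by rw [tensorHom_comp_tensorHom, h.retract, h'.retract, id_tensorHom_id]

variable [BraidedCategory V] [MonoidalClosed V]

lemma RegProjective.sigma_tensor_sigma [HasCoproducts.{v} V] {σ τ : Type v} (A : σ → V)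
    (B : τ → V) (h : ∀ x y, RegProjective (A x ⊗ B y)) : RegProjective ((∐ A) ⊗ ∐ B) :=
  RegProjective.obj_sigma (tensorRight (∐ B)) A fun x =>
    RegProjective.obj_sigma (tensorLeft (A x)) B (h x)

lemma regProjective_tensor [HasCoproducts.{v} V] [HasCoequalizers V] {ι : Type v} {G : ι → V}
    (hG : ObjectProperty.IsDetecting (Set.range G)) (hGrp : ∀ i, RegProjective (G i))
    (hGG : ∀ i j, RegProjective (G i ⊗ G j)) {P Q : V} (hP : RegProjective P)
    (hQ : RegProjective Q) : RegProjective (P ⊗ Q) := by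
  obtain ⟨σ, a, ⟨hPr⟩⟩ := hP.exists_retract_sigma hG hGrp
  obtain ⟨τ, b, ⟨hQr⟩⟩ := hQ.exists_retract_sigma hG hGrp
  exact (RegProjective.sigma_tensor_sigma _ _ fun x y => hGG (a x) (b y)).of_retract_s9
    (Retract.tensor hPr hQr)

lemma finPres_tensor [HasColimitsOfSize.{v, v} V] {ι : Type v} {G : ι → V}
    (hG : ObjectProperty.IsDetecting (Set.range G)) (hGfp : ∀ i, FinPres (G i))
    (hGG : ∀ i j, FinPres (G i ⊗ G j)) {P Q : V} (hP : FinPres P) (hQ : FinPres Q) :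
    FinPres (P ⊗ Q) := by
  have ihom_finitary (X : V) (hX : ∀ i, FinPres (X ⊗ G i)) (J : Type v) [SmallCategory J]
      (hJ : IsFiltered J) : PreservesColimitsOfShape J (ihom X) :=
    preservesColimitsOfShape_of_isDetecting (ihom.adjunction X) hG hGfp hX J hJ
  have hQG (j : ι) : FinPres (Q ⊗ G j) :=
    (FinPres.obj_of_adjunction (ihom.adjunction (G j)) (ihom_finitary _ (hGG j)) hQ).of_iso
      (β_ _ _)
  exact (FinPres.obj_of_adjunction (ihom.adjunction Q) (ihom_finitary Q hQG) hP).of_iso (β_ Q P)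

end Monoidal

/-- In a symmetric monoidal finitary quasivariety, regular projective
objects are closed under the tensor product, and consequently so are the finitely
presentable regular projective objects. -/
theorem statement9 (V : Type u) [Category.{v} V] [MonoidalCategory V]
    [SymmetricCategory V] [MonoidalClosed V] (hV : IsSMFinitaryQuasivariety V) :
    (∀ P Q : V, RegProjective P → RegProjective Q → RegProjective (P ⊗ Q)) ∧
    (∀ P Q : V, FinPres P → RegProjective P → FinPres Q → RegProjective Q →
      FinPres (P ⊗ Q) ∧ RegProjective (P ⊗ Q)) := by
  have := hV.hasColimits
  obtain ⟨ι, G, hG, hGen, hGG⟩ := hV.exists_generator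
  have regProj (P Q : V) : RegProjective P → RegProjective Q → RegProjective (P ⊗ Q) :=
    regProjective_tensor hG (fun i => (hGen i).2) (fun i j => (hGG i j).2)
  refine ⟨regProj, fun P Q hPf hPr hQf hQr => ⟨?_, regProj P Q hPr hQr⟩⟩
  exact finPres_tensor hG (fun i => (hGen i).1) (fun i j => (hGG i j).1) hPf hQf

end Paper
end
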